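/- Suppose every estimate pair (x̂_i, P_i), i = 1,...,I, is conservative with respect to the random vector x, i.e., P_i ⪰ E[(x − x̂_i)(x − x̂_i)^T] for all i. Then for any positive weights w_i summing to 1, with x̂_AA = Σ_i w_i x̂_i, the weighted matrix P_AA = Σ_i w_i (P_i + (x̂_AA − x̂_i)(x̂_AA − x̂_i)^T) satisfies P_AA ⪰ E[(x − x̂_AA)(x − x̂_AA)^T]; that is, the AA-fused pair (x̂_AA, P_AA) is conservative. -/

import Mathlib

open MeasureTheory Matrix

variable {n : ℕ}

lemma psd_add {A B : Matrix (Fin n) (Fin n) ℝ} (hA : A.PosSemidef) (hB : B.PosSemidef) :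
    (A + B).PosSemidef :=
  PosSemidef.of_dotProduct_mulVec_nonneg (hA.1.add hB.1) fun x => by
    rw [add_mulVec, dotProduct_add]; exact add_nonneg (hA.dotProduct_mulVec_nonneg x) (hB.dotProduct_mulVec_nonneg x)

lemma psd_smul {c : ℝ} (hc : 0 ≤ c) {A : Matrix (Fin n) (Fin n) ℝ} (hA : A.PosSemidef) :
    (c • A).PosSemidef := by
  refine PosSemidef.of_dotProduct_mulVec_nonneg ?_ (fun x => ?_)
  · unfold Matrix.IsHermitian
    rw [conjTranspose_smul, hA.1]
    simp
  · rw [smul_mulVec, dotProduct_smul, smul_eq_mul]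
    exact mul_nonneg hc (hA.dotProduct_mulVec_nonneg x)

lemma psd_vecMulVec (v : Fin n → ℝ) : (vecMulVec v v).PosSemidef := by
  refine PosSemidef.of_dotProduct_mulVec_nonneg ?_ (fun x => ?_)
  · ext a b
    simp [Matrix.IsHermitian, conjTranspose_apply, vecMulVec_apply, mul_comm]
  · have h : dotProduct (star x) ((vecMulVec v v) *ᵥ x) = (∑ a, v a * x a) ^ 2 := by
      simp [dotProduct, mulVec, vecMulVec_apply, Finset.mul_sum, Finset.sum_mul, pow_two]
      rw [Finset.sum_comm]
      congr 1; funext a; congr 1; funext b; ring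
    rw [h]; positivity

lemma psd_sum {ι : Type*} (s : Finset ι) (f : ι → Matrix (Fin n) (Fin n) ℝ)
    (h : ∀ i ∈ s, (f i).PosSemidef) : (∑ i ∈ s, f i).PosSemidef :=
  Finset.sum_induction f _ (fun _ _ ha hb => psd_add ha hb) Matrix.PosSemidef.zero h

lemma key_integral {Ω : Type*} [MeasurableSpace Ω] (μ : Measure Ω) [IsProbabilityMeasure μ]
    (x : Ω → Fin n → ℝ)
    (hint1 : ∀ a, Integrable (fun ω => x ω a) μ)
    (hint2 : ∀ a b, Integrable (fun ω => x ω a * x ω b) μ)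
    (a b : Fin n) (c d : ℝ) :
    ∫ ω, (x ω a - c) * (x ω b - d) ∂μ =
      (∫ ω, x ω a * x ω b ∂μ) - d * (∫ ω, x ω a ∂μ) - c * (∫ ω, x ω b ∂μ) + c * d := by
  have h1 : ∀ ω, (x ω a - c) * (x ω b - d)
      = (x ω a * x ω b - d * x ω a - c * x ω b) + c * d := fun ω => by ring
  rw [show (fun ω => (x ω a - c) * (x ω b - d))
      = fun ω => (x ω a * x ω b - d * x ω a - c * x ω b) + c * d from funext h1]
  have i2 : Integrable (fun ω => x ω a * x ω b - d * x ω a) μ :=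
    (hint2 a b).sub ((hint1 a).const_mul d)
  have i3 : Integrable (fun ω => x ω a * x ω b - d * x ω a - c * x ω b) μ :=
    i2.sub ((hint1 b).const_mul c)
  rw [integral_add i3 (integrable_const _),
    integral_sub i2 ((hint1 b).const_mul c),
    integral_sub (hint2 a b) ((hint1 a).const_mul d),
    MeasureTheory.integral_const_mul, MeasureTheory.integral_const_mul, integral_const]
  simp

lemma scalar_id {I : ℕ} (w u v p : Fin I → ℝ) (A Ba Bb : ℝ) (hsum : ∑ i, w i = 1) :
    ∑ i, w i * (p i + ((∑ k, w k * u k) - u i) * ((∑ k, w k * v k) - v i))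
      - (A - (∑ k, w k * v k) * Ba - (∑ k, w k * u k) * Bb
          + (∑ k, w k * u k) * (∑ k, w k * v k))
    = ∑ i, (w i * (p i - (A - v i * Ba - u i * Bb + u i * v i))
        + 2 * w i * (((∑ k, w k * u k) - u i) * ((∑ k, w k * v k) - v i))) := by
  set U := ∑ k, w k * u k with hU
  set V := ∑ k, w k * v k with hV
  have h : (∑ i, w i * (p i + (U - u i) * (V - v i)))
      - (∑ i, (w i * (p i - (A - v i * Ba - u i * Bb + u i * v i))
          + 2 * w i * ((U - u i) * (V - v i))))
      = A - V * Ba - U * Bb + U * V := by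
    rw [← Finset.sum_sub_distrib]
    have hc : ∀ i ∈ Finset.univ, (w i * (p i + (U - u i) * (V - v i)))
        - (w i * (p i - (A - v i * Ba - u i * Bb + u i * v i))
            + 2 * w i * ((U - u i) * (V - v i)))
        = w i * A - (w i * v i) * Ba - (w i * u i) * Bb - w i * (U * V)
          + U * (w i * v i) + V * (w i * u i) := by intro i _; ring
    rw [Finset.sum_congr rfl hc]
    simp only [Finset.sum_add_distrib, Finset.sum_sub_distrib, ← Finset.sum_mul,
      ← Finset.mul_sum, hsum, ← hU, ← hV]
    ring
  linarith [h]

/-- Lemma 2: if every fusing estimate pair is conservative, then the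
AA-fused pair `(x̂_AA, P_AA)` with the adjusted covariances is conservative. -/
theorem AA_fusion_conservative {Ω : Type*} [MeasurableSpace Ω]
    (μ : Measure Ω) [IsProbabilityMeasure μ]
    (n I : ℕ) (x : Ω → Fin n → ℝ)
    (hint1 : ∀ a, Integrable (fun ω => x ω a) μ)
    (hint2 : ∀ a b, Integrable (fun ω => x ω a * x ω b) μ)
    (xh : Fin I → Fin n → ℝ) (P : Fin I → Matrix (Fin n) (Fin n) ℝ)
    (w : Fin I → ℝ) (hw : ∀ i, 0 < w i) (hsum : ∑ i, w i = 1)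
    (hcons : ∀ i, (P i -
      Matrix.of (fun a b => ∫ ω, (x ω a - xh i a) * (x ω b - xh i b) ∂μ)).PosSemidef) :
    ((∑ i, w i • (P i +
        vecMulVec ((fun a => ∑ k, w k * xh k a) - xh i)
                  ((fun a => ∑ k, w k * xh k a) - xh i))) -
      Matrix.of (fun a b =>
        ∫ ω, (x ω a - ∑ k, w k * xh k a) * (x ω b - ∑ k, w k * xh k b) ∂μ)).PosSemidef := by
  have heq : ((∑ i, w i • (P i +
        vecMulVec ((fun a => ∑ k, w k * xh k a) - xh i)
                  ((fun a => ∑ k, w k * xh k a) - xh i))) -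
      Matrix.of (fun a b =>
        ∫ ω, (x ω a - ∑ k, w k * xh k a) * (x ω b - ∑ k, w k * xh k b) ∂μ))
      = ∑ i, (w i • (P i -
          Matrix.of (fun a b => ∫ ω, (x ω a - xh i a) * (x ω b - xh i b) ∂μ)) +
        (2 * w i) • vecMulVec ((fun a => ∑ k, w k * xh k a) - xh i)
                  ((fun a => ∑ k, w k * xh k a) - xh i)) := by
    ext a b
    simp only [Matrix.sub_apply, Matrix.sum_apply, Matrix.smul_apply, Matrix.add_apply,
      Matrix.of_apply, vecMulVec_apply, Pi.sub_apply, smul_eq_mul,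
      key_integral μ x hint1 hint2]
    exact scalar_id w (fun i => xh i a) (fun i => xh i b) (fun i => P i a b) _ _ _ hsum
  rw [heq]
  exact psd_sum _ _ (fun i _ => psd_add (psd_smul (hw i).le (hcons i))
    (psd_smul (by linarith [(hw i).le]) (psd_vecMulVec _)))
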